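/- Let t = T[l, r] be a substring of T, and suppose T[l₁, r₁] ∈ S_t and T[l₂, r₂] ∈ S_t with l₁ ≤ l, l₂ ≤ l, r ≤ r₁, and r ≤ r₂. Then T[min(l₁, l₂), max(r₁, r₂)] ∈ S_t. -/
import Mathlib


/-- `frag T i j` is the fragment `T[i, j]` of `T` (1-indexed, inclusive). -/
def frag {α : Type*} (T : List α) (i j : ℕ) : List α := (T.drop (i - 1)).take (j - i + 1)

/-- `t` is a substring of `T`, i.e. `t = T[i, j]` for some `1 ≤ i ≤ j ≤ |T|`. -/
def IsSub {α : Type*} (T t : List α) : Prop :=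
  ∃ i j : ℕ, 1 ≤ i ∧ i ≤ j ∧ j ≤ T.length ∧ frag T i j = t

/-- `occ T t` is the set of occurrences of `t` in `T`: pairs `(i, j)` with
`1 ≤ i ≤ j ≤ |T|` and `T[i, j] = t`. -/
def occ {α : Type*} (T t : List α) : Set (ℕ × ℕ) :=
  {p | 1 ≤ p.1 ∧ p.1 ≤ p.2 ∧ p.2 ≤ T.length ∧ frag T p.1 p.2 = t}

/-- `Sset T t` is the set `S_t`: substrings `s` of `T` such that `t` occurs in `s`
and `|occ_T(t)| = |occ_T(s)|`. -/
def Sset {α : Type*} (T t : List α) : Set (List α) :=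
  {s | IsSub T s ∧ (∃ a b : ℕ, 1 ≤ a ∧ a ≤ b ∧ b ≤ s.length ∧ frag s a b = t) ∧
    (occ T t).ncard = (occ T s).ncard}


lemma frag_length {α : Type*} (T : List α) {i j : ℕ} (h1 : 1 ≤ i) (h2 : i ≤ j)
    (h3 : j ≤ T.length) : (frag T i j).length = j - i + 1 := by
  simp [frag]; omega

lemma frag_getElem? {α : Type*} (T : List α) {i j k : ℕ} (hk : k ≤ j - i) :
    (frag T i j)[k]? = T[i - 1 + k]? := by
  simp [frag, List.getElem?_take, List.getElem?_drop]
  omega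

lemma frag_eq_getElem? {α : Type*} {T : List α} {i j i' j' k : ℕ}
    (h : frag T i j = frag T i' j') (hk : k ≤ j - i) (hk' : k ≤ j' - i') :
    T[i - 1 + k]? = T[i' - 1 + k]? := by
  rw [← frag_getElem? T hk, ← frag_getElem? T hk', h]

lemma frag_frag {α : Type*} (T : List α) {i j a b : ℕ} (h1 : 1 ≤ i) (h2 : i ≤ j)
    (h3 : j ≤ T.length) (ha : 1 ≤ a) (hab : a ≤ b) (hb : b ≤ j - i + 1) :
    frag (frag T i j) a b = frag T (i + a - 1) (i + b - 1) := by
  apply List.ext_getElem?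
  intro k
  by_cases hk : k ≤ b - a
  · rw [frag_getElem? _ (by omega : k ≤ b - a), frag_getElem? T (by omega : a - 1 + k ≤ j - i),
      frag_getElem? T (by omega : k ≤ (i + b - 1) - (i + a - 1))]
    congr 1; omega
  · rw [List.getElem?_eq_none, List.getElem?_eq_none]
    · rw [frag_length T (by omega) (by omega) (by omega)]; omega
    · rw [frag_length (frag T i j) ha hab (by rw [frag_length T h1 h2 h3]; omega)]; omega


lemma occ_finite {α : Type*} (T t : List α) : (occ T t).Finite := by
  apply Set.Finite.subset ((Set.finite_Icc 1 T.length).prod (Set.finite_Icc 1 T.length))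
  rintro ⟨p, q⟩ ⟨a1, a2, a3, -⟩
  simp only [Set.mem_prod, Set.mem_Icc]
  omega

lemma occ_snd {α : Type*} {T : List α} {l r : ℕ} (h1 : 1 ≤ l) (h2 : l ≤ r)
    (h3 : r ≤ T.length) {p q : ℕ} (h : (p, q) ∈ occ T (frag T l r)) : q = p + (r - l) := by
  obtain ⟨a1, a2, a3, a4⟩ := h
  have := congrArg List.length a4
  rw [frag_length T a1 a2 a3, frag_length T h1 h2 h3] at this
  omega

lemma frag_eq_of {α : Type*} {T : List α} {i j i' j' : ℕ} (h1 : 1 ≤ i) (h2 : i ≤ j)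
    (h3 : j ≤ T.length) (h1' : 1 ≤ i') (h2' : i' ≤ j') (h3' : j' ≤ T.length)
    (hlen : j - i = j' - i') (hpt : ∀ k ≤ j - i, T[i - 1 + k]? = T[i' - 1 + k]?) :
    frag T i j = frag T i' j' := by
  apply List.ext_getElem?
  intro k
  by_cases hk : k ≤ j - i
  · rw [frag_getElem? T hk, frag_getElem? T (by omega : k ≤ j' - i')]
    exact hpt k hk
  · rw [List.getElem?_eq_none, List.getElem?_eq_none]
    · rw [frag_length T h1' h2' h3']; omega
    · rw [frag_length T h1 h2 h3]; omega

lemma occ_ncard_le {α : Type*} (T : List α) {l r L R : ℕ}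
    (hL : 1 ≤ L) (hLl : L ≤ l) (hlr : l ≤ r) (hrR : r ≤ R) (hR : R ≤ T.length) :
    (occ T (frag T L R)).ncard ≤ (occ T (frag T l r)).ncard := by
  apply Set.ncard_le_ncard_of_injOn (fun p => (p.1 + (l - L), p.1 + (l - L) + (r - l)))
    ?_ ?_ (occ_finite T _)
  · rintro ⟨p, q⟩ hm
    have hq := occ_snd hL (by omega) hR hm
    obtain ⟨a1, a2, a3, a4⟩ := hm
    dsimp only
    refine ⟨by omega, by omega, by omega, ?_⟩
    apply frag_eq_of (by omega) (by omega) (by omega) (by omega) (by omega) (by omega)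
    · omega
    · intro k hk
      have h5 := frag_eq_getElem? a4 (k := (l - L) + k) (by omega) (by omega)
      have e1 : p - 1 + ((l - L) + k) = p + (l - L) - 1 + k := by omega
      have e2 : L - 1 + ((l - L) + k) = l - 1 + k := by omega
      rw [e1, e2] at h5
      exact h5
  · rintro ⟨p, q⟩ hp ⟨p', q'⟩ hp' h
    have h1 := occ_snd hL (by omega) hR hp
    have h2 := occ_snd hL (by omega) hR hp'
    simp only [Prod.mk.injEq] at h
    have : p = p' := by omega
    simp_all

lemma occ_extend {α : Type*} (T : List α) {l r L R : ℕ}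
    (hL : 1 ≤ L) (hLl : L ≤ l) (hlr : l ≤ r) (hrR : r ≤ R) (hR : R ≤ T.length)
    (hcard : (occ T (frag T l r)).ncard = (occ T (frag T L R)).ncard)
    {p q : ℕ} (hm : (p, q) ∈ occ T (frag T l r)) :
    l - L < p ∧ (p - (l - L), p - (l - L) + (R - L)) ∈ occ T (frag T L R) := by
  set f : ℕ × ℕ → ℕ × ℕ := fun x => (x.1 + (l - L), x.1 + (l - L) + (r - l)) with hf
  have hmaps : ∀ x ∈ occ T (frag T L R), f x ∈ occ T (frag T l r) := by
    rintro ⟨p', q'⟩ hm'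
    have hq' := occ_snd hL (by omega) hR hm'
    obtain ⟨a1, a2, a3, a4⟩ := hm'
    simp only [hf]
    refine ⟨by omega, by omega, by omega, ?_⟩
    apply frag_eq_of (by omega) (by omega) (by omega) (by omega) (by omega) (by omega)
    · omega
    · intro k hk
      have h5 := frag_eq_getElem? a4 (k := (l - L) + k) (by omega) (by omega)
      have e1 : p' - 1 + ((l - L) + k) = p' + (l - L) - 1 + k := by omega
      have e2 : L - 1 + ((l - L) + k) = l - 1 + k := by omega
      rw [e1, e2] at h5
      exact h5
  have hinj : Set.InjOn f (occ T (frag T L R)) := by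
    rintro ⟨p1, q1⟩ hp1 ⟨p2, q2⟩ hp2 h
    have h1 := occ_snd hL (by omega) hR hp1
    have h2 := occ_snd hL (by omega) hR hp2
    simp only [hf, Prod.mk.injEq] at h
    have : p1 = p2 := by omega
    simp_all
  have himg : f '' (occ T (frag T L R)) = occ T (frag T l r) := by
    apply Set.eq_of_subset_of_ncard_le
    · rintro x ⟨y, hy, rfl⟩; exact hmaps y hy
    · rw [Set.ncard_image_of_injOn hinj, hcard]
    · exact occ_finite T _
  rw [← himg] at hm
  obtain ⟨⟨p', q'⟩, hy, hfy⟩ := hm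
  have hq' := occ_snd hL (by omega) hR hy
  have hb := hy.1
  simp only [hf, Prod.mk.injEq] at hfy
  have hp : p' = p - (l - L) := by omega
  constructor
  · omega
  · rw [← hp, ← hq']
    exact hy


lemma cross {α : Type*} (T : List α) (l r l₁ r₁ l₂ r₂ : ℕ)
    (hl : 1 ≤ l) (hlr : l ≤ r) (hr : r ≤ T.length)
    (hl₁ : 1 ≤ l₁) (hr₁ : r₁ ≤ T.length) (hl₂ : 1 ≤ l₂) (hr₂ : r₂ ≤ T.length)
    (hll₁ : l₁ ≤ l) (hll₂ : l₂ ≤ l) (hrr₁ : r ≤ r₁) (hrr₂ : r ≤ r₂)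
    (hc₁ : (occ T (frag T l r)).ncard = (occ T (frag T l₁ r₁)).ncard)
    (hc₂ : (occ T (frag T l r)).ncard = (occ T (frag T l₂ r₂)).ncard) :
    frag T l₁ r₂ ∈ Sset T (frag T l r) := by
  refine ⟨⟨l₁, r₂, hl₁, by omega, hr₂, rfl⟩,
    ⟨l - l₁ + 1, r - l₁ + 1, by omega, by omega, ?_, ?_⟩, ?_⟩
  · rw [frag_length T hl₁ (by omega) hr₂]; omega
  · rw [frag_frag T hl₁ (by omega) hr₂ (by omega) (by omega) (by omega)]
    congr 1 <;> omega
  · apply le_antisymm ?_ (occ_ncard_le T hl₁ hll₁ hlr (by omega) hr₂)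
    apply Set.ncard_le_ncard_of_injOn (fun x => (x.1 - (l - l₁), x.2 + (r₂ - r)))
      ?_ ?_ (occ_finite T _)
    · rintro ⟨p, q⟩ hm
      have hq := occ_snd hl hlr hr hm
      obtain ⟨e1a, e1b⟩ := occ_extend T hl₁ hll₁ hlr hrr₁ hr₁ hc₁ hm
      obtain ⟨e2a, e2b⟩ := occ_extend T hl₂ hll₂ hlr hrr₂ hr₂ hc₂ hm
      have hend2 : p - (l - l₂) + (r₂ - l₂) ≤ T.length := e2b.2.2.1
      dsimp only
      refine ⟨by omega, by omega, by omega, ?_⟩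
      apply frag_eq_of (by omega) (by omega) (by omega) hl₁ (by omega) hr₂ (by omega)
      intro k hk
      by_cases hk1 : k ≤ r₁ - l₁
      · exact frag_eq_getElem? e1b.2.2.2 (by omega) (by omega)
      · have h5 := frag_eq_getElem? e2b.2.2.2 (k := l₁ + k - l₂) (by omega) (by omega)
        have e1 : p - (l - l₂) - 1 + (l₁ + k - l₂) = p - (l - l₁) - 1 + k := by omega
        have e2 : l₂ - 1 + (l₁ + k - l₂) = l₁ - 1 + k := by omega
        rw [e1, e2] at h5
        exact h5
    · rintro ⟨p, q⟩ hp ⟨p', q'⟩ hp' h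
      have h1 := occ_snd hl hlr hr hp
      have h2 := occ_snd hl hlr hr hp'
      have e1 := (occ_extend T hl₁ hll₁ hlr hrr₁ hr₁ hc₁ hp).1
      have e2 := (occ_extend T hl₁ hll₁ hlr hrr₁ hr₁ hc₁ hp').1
      simp only [Prod.mk.injEq] at h
      have : p = p' := by omega
      simp_all

/-- If `t = T[l, r]` and `T[l₁, r₁], T[l₂, r₂] ∈ S_t` with `l₁, l₂ ≤ l ≤ r ≤ r₁, r₂`,
then `T[min(l₁, l₂), max(r₁, r₂)] ∈ S_t`. -/
theorem mergeSset {α : Type*} (T : List α) (l r l₁ r₁ l₂ r₂ : ℕ)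
    (hl : 1 ≤ l) (hlr : l ≤ r) (hr : r ≤ T.length)
    (hl₁ : 1 ≤ l₁) (hr₁ : r₁ ≤ T.length) (hl₂ : 1 ≤ l₂) (hr₂ : r₂ ≤ T.length)
    (h₁ : frag T l₁ r₁ ∈ Sset T (frag T l r)) (h₂ : frag T l₂ r₂ ∈ Sset T (frag T l r))
    (hll₁ : l₁ ≤ l) (hll₂ : l₂ ≤ l) (hrr₁ : r ≤ r₁) (hrr₂ : r ≤ r₂) :
    frag T (min l₁ l₂) (max r₁ r₂) ∈ Sset T (frag T l r) := by
  rcases le_total l₁ l₂ with h | h <;> rcases le_total r₁ r₂ with h' | h'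
  · rw [min_eq_left h, max_eq_right h']
    exact cross T l r l₁ r₁ l₂ r₂ hl hlr hr hl₁ hr₁ hl₂ hr₂ hll₁ hll₂ hrr₁ hrr₂ h₁.2.2 h₂.2.2
  · rw [min_eq_left h, max_eq_left h']
    exact cross T l r l₁ r₁ l₁ r₁ hl hlr hr hl₁ hr₁ hl₁ hr₁ hll₁ hll₁ hrr₁ hrr₁ h₁.2.2 h₁.2.2
  · rw [min_eq_right h, max_eq_right h']
    exact cross T l r l₂ r₂ l₂ r₂ hl hlr hr hl₂ hr₂ hl₂ hr₂ hll₂ hll₂ hrr₂ hrr₂ h₂.2.2 h₂.2.2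
  · rw [min_eq_right h, max_eq_left h']
    exact cross T l r l₂ r₂ l₁ r₁ hl hlr hr hl₂ hr₂ hl₁ hr₁ hll₂ hll₁ hrr₂ hrr₁ h₂.2.2 h₁.2.2
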